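/- For every positive even integer p, every positive integer q with gcd(p,q) = 1, and every natural number n, one has ∑_{k=1}^{(p+2nq)/2} (−1)^{⌊(2k−1)q/(p+2nq)⌋} = ∑_{k=1}^{p/2} (−1)^{⌊(2k−1)q/p⌋} + n, where ⌊·⌋ denotes the floor of the indicated rational number. (This is the n-fold iteration of the horizontal-twist recursion lk(R_{(p+2q)/q}) = lk(R_{p/q}) + 1 of Proposition 3.2(3), which the paper's algorithm applies repeatedly.) -/

import Mathlib

/-!
Split the sum defining `S(p, q)` according to the value `j ∈ [0, q)` of `⌊(2k - 1)q/p⌋`: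
the `k` with value `j` form an interval `[c_p(j), c_p(j + 1))` with
`c_p(j) = ⌈(jp + q)/(2q)⌉`, so `S(p, q) = ∑_{j<q} (-1)^j (c_p(j + 1) - c_p(j))`.
Replacing `p` by `p + 2nq` shifts `c_p(j)` by exactly `nj`, which adds `n ∑_{j<q} (-1)^j`
to the sum; this alternating sum is `1` because `q` is odd, `p` being even and coprime to `q`.
-/

open Finset

/-- `S(p, q)`, with `⌊(2k - 1)q/p⌋` computed by integer division (the two agree for `p > 0`). -/
noncomputable def tulerSum (p q : ℤ) : ℤ :=
  ∑ k ∈ Icc 1 (p / 2), (((2 * k - 1) * q / p).negOnePow : ℤ)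

/-- The least `k` with `j ≤ ⌊(2k - 1)q/p⌋`, i.e. `⌈(jp + q)/(2q)⌉`. -/
def tulerCut (p q j : ℤ) : ℤ :=
  (j * p + q - 1) / (2 * q) + 1

lemma Int.floor_intCast_div_intCast_of_pos (a : ℤ) {b : ℤ} (hb : 0 < b) :
    ⌊(a : ℚ) / (b : ℚ)⌋ = a / b := by
  lift b to ℕ using hb.le
  exact_mod_cast Rat.floor_intCast_div_natCast a b

lemma Int.odd_of_gcd_eq_one_of_even {p q : ℤ} (hp : Even p) (hpq : Int.gcd p q = 1) : Odd q := by
  refine Int.not_even_iff_odd.1 fun hq => ?_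
  have h2 : (2 : ℤ) ∣ Int.gcd p q := Int.dvd_coe_gcd hp.two_dvd hq.two_dvd
  rw [hpq] at h2
  norm_num at h2

lemma two_mul_sum_Ico_negOnePow {q : ℤ} (hq : 0 ≤ q) :
    2 * ∑ j ∈ Ico 0 q, (j.negOnePow : ℤ) = 1 - q.negOnePow := by
  induction q, hq using Int.leInduction with
  | base => simp
  | succ q hq ih =>
    rw [← insert_Ico_right_eq_Ico_add_one hq, sum_insert (by simp), Int.negOnePow_succ]
    push_cast
    linarith

section

variable {p q : ℤ}

lemma tulerCut_le_iff (hq : 0 < q) {j k : ℤ} : tulerCut p q j ≤ k ↔ j * p ≤ (2 * k - 1) * q := by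
  rw [tulerCut, Int.add_one_le_iff, Int.ediv_lt_iff_lt_mul (by omega)]
  constructor <;> intro h <;> linarith

lemma tulerCut_add_two_mul (hq : 0 < q) (n j : ℤ) :
    tulerCut (p + 2 * n * q) q j = tulerCut p q j + n * j := by
  have hsplit : j * (p + 2 * n * q) + q - 1 = j * p + q - 1 + n * j * (2 * q) := by ring
  rw [tulerCut, tulerCut, hsplit, Int.add_mul_ediv_right _ _ (by omega)]
  ring

lemma mem_Icc_iff_ediv_mem_Ico (hp : 0 < p) (hq : 0 < q) {k : ℤ} :
    k ∈ Icc 1 (p / 2) ↔ (2 * k - 1) * q / p ∈ Ico 0 q := by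
  rw [mem_Icc, mem_Ico, Int.ediv_nonneg_iff_of_pos hp, Int.ediv_lt_iff_lt_mul hp,
    Int.le_ediv_iff_mul_le two_pos, mul_nonneg_iff_of_pos_right hq, mul_comm q p,
    mul_lt_mul_iff_left₀ hq]
  omega

lemma filter_ediv_eq_eq_Ico (hp : 0 < p) (hq : 0 < q) {j : ℤ} (hj : j ∈ Ico 0 q) :
    {k ∈ Icc 1 (p / 2) | (2 * k - 1) * q / p = j} =
      Ico (tulerCut p q j) (tulerCut p q (j + 1)) := by
  ext k
  rw [mem_filter, mem_Ico, tulerCut_le_iff hq, ← not_le, tulerCut_le_iff hq, not_le, add_mul,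
    one_mul, ← Int.ediv_eq_iff_of_pos hp]
  constructor
  · exact fun h => h.2
  · intro hk
    exact ⟨(mem_Icc_iff_ediv_mem_Ico hp hq).2 (hk ▸ hj), hk⟩

lemma tulerCut_mono (hp : 0 < p) (hq : 0 < q) (j : ℤ) : tulerCut p q j ≤ tulerCut p q (j + 1) := by
  have h := (tulerCut_le_iff (p := p) (j := j + 1) hq).1 le_rfl
  rw [tulerCut_le_iff hq]
  linarith

lemma tulerSum_eq_sum_tulerCut (hp : 0 < p) (hq : 0 < q) :
    tulerSum p q = ∑ j ∈ Ico 0 q, (j.negOnePow : ℤ) * (tulerCut p q (j + 1) - tulerCut p q j) := by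
  rw [tulerSum, ← sum_fiberwise_of_maps_to fun k => (mem_Icc_iff_ediv_mem_Ico hp hq).1]
  refine sum_congr rfl fun j hj => ?_
  rw [sum_congr rfl fun k hk => by rw [(mem_filter.1 hk).2], sum_const,
    filter_ediv_eq_eq_Ico hp hq hj, Int.card_Ico, nsmul_eq_mul,
    Int.toNat_of_nonneg (by linarith [tulerCut_mono hp hq j]), mul_comm]

theorem tulerSum_add_two_mul (hp : 0 < p) (hq : 0 < q) (hodd : Odd q) {n : ℤ}
    (hpn : 0 < p + 2 * n * q) : tulerSum (p + 2 * n * q) q = tulerSum p q + n := by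
  have halt : ∑ j ∈ Ico 0 q, (j.negOnePow : ℤ) = 1 := by
    have h := two_mul_sum_Ico_negOnePow hq.le
    rw [Int.negOnePow_odd q hodd] at h
    push_cast at h
    linarith
  simp only [tulerSum_eq_sum_tulerCut hpn hq, tulerSum_eq_sum_tulerCut hp hq,
    tulerCut_add_two_mul hq]
  calc ∑ j ∈ Ico 0 q,
        (j.negOnePow : ℤ) * (tulerCut p q (j + 1) + n * (j + 1) - (tulerCut p q j + n * j))
      = ∑ j ∈ Ico 0 q, (j.negOnePow : ℤ) * (tulerCut p q (j + 1) - tulerCut p q j)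
          + n * ∑ j ∈ Ico 0 q, (j.negOnePow : ℤ) := by
        rw [mul_sum, ← sum_add_distrib]
        exact sum_congr rfl fun j _ => by ring
    _ = _ := by rw [halt, mul_one]

end

/-- The `n`-fold iteration of the horizontal-twist recursion of
Proposition 3.2(3): `S(p + 2nq, q) = S(p, q) + n` for Tuler sums. -/
theorem tuler_sum_iterate_twists (p q : ℤ) (hp : 0 < p) (hpe : Even p)
    (hq : 0 < q) (hpq : Int.gcd p q = 1) (n : ℕ) :
    ∑ k ∈ Finset.Icc (1 : ℤ) ((p + 2 * (n : ℤ) * q) / 2),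
        (((-1 : ℤˣ) ^ ⌊(((2 * k - 1) * q : ℤ) : ℚ) / (((p + 2 * (n : ℤ) * q) : ℤ) : ℚ)⌋ : ℤˣ) : ℤ)
      = (∑ k ∈ Finset.Icc (1 : ℤ) (p / 2),
        (((-1 : ℤˣ) ^ ⌊(((2 * k - 1) * q : ℤ) : ℚ) / ((p : ℤ) : ℚ)⌋ : ℤˣ) : ℤ)) + (n : ℤ) := by
  have hpn : 0 < p + 2 * n * q := by positivity
  simp only [Int.floor_intCast_div_intCast_of_pos _ hp, Int.floor_intCast_div_intCast_of_pos _ hpn]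
  exact tulerSum_add_two_mul hp hq (Int.odd_of_gcd_eq_one_of_even hpe hpq) hpn
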